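/- There exists an inverse construction CTRL⁻¹: define the isometry V: ℂ ⊕ ℂ^d → ℂ² ⊗ ℂ^d by V|ψ⟩ = |1⟩⊗|ψ⟩ for |ψ⟩ in the d-dimensional sector and V(1⊕0) = |0⟩⊗|φ₀⟩ for a fixed unit vector |φ₀⟩ ∈ ℂ^d. Then for any channel C on ℂ^d with pinned Kraus operator C_1, conjugating the controlled channel ctrl_{C_1}-C by V (i.e. ρ ↦ V† (ctrl_{C_1}-C)(VρV†) V, extended to a channel) yields the sector-preserving channel C̃[C_1] with Kraus operators δ_{i1} ⊕ C_i. -/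

import Mathlib

open Matrix Kronecker

noncomputable section

/-- The controlled Kraus operator `α • (|0⟩⟨0| ⊗ I) + |1⟩⟨1| ⊗ C` on `ℂ² ⊗ ℂ^d`. -/
def ctrlOp {d : ℕ} (α : ℂ) (C : Matrix (Fin d) (Fin d) ℂ) :
    Matrix (Fin 2 × Fin d) (Fin 2 × Fin d) ℂ :=
  α • (Matrix.single (0 : Fin 2) 0 (1:ℂ) ⊗ₖ (1 : Matrix (Fin d) (Fin d) ℂ))
    + Matrix.single (1 : Fin 2) 1 (1:ℂ) ⊗ₖ C

/-- Block-diagonal operator `α ⊕ C` on `H_S = ℂ ⊕ ℂ^d`. -/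
def sectOp {d : ℕ} (α : ℂ) (C : Matrix (Fin d) (Fin d) ℂ) :
    Matrix (Unit ⊕ Fin d) (Unit ⊕ Fin d) ℂ :=
  Matrix.fromBlocks (α • (1 : Matrix Unit Unit ℂ)) 0 0 C

/-- The isometry `V : ℂ ⊕ ℂ^d → ℂ² ⊗ ℂ^d` with `V|ψ⟩ = |1⟩⊗|ψ⟩` on the `d`-sector
and `V(1⊕0) = |0⟩⊗|φ₀⟩`. -/
def Viso {d : ℕ} (φ₀ : Fin d → ℂ) :
    Matrix (Fin 2 × Fin d) (Unit ⊕ Fin d) ℂ :=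
  Matrix.of fun p s => match s with
    | Sum.inl _ => (if p.1 = 0 then 1 else 0) * φ₀ p.2
    | Sum.inr j => if p.1 = 1 ∧ p.2 = j then 1 else 0

lemma Viso_isometry {d : ℕ} (φ₀ : Fin d → ℂ) (hφ : ∑ t, star (φ₀ t) * φ₀ t = 1) :
    (Viso φ₀)ᴴ * Viso φ₀ = 1 := by
  ext s t
  simp only [Matrix.mul_apply, Matrix.conjTranspose_apply, Viso, Matrix.of_apply,
    Fintype.sum_prod_type]
  cases s <;> cases t <;>
    simp [Fin.sum_univ_two, Matrix.one_apply, hφ, Finset.sum_ite_eq', eq_comm] <;>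
    exact hφ.symm

lemma ctrl_intertwine {d : ℕ} (φ₀ : Fin d → ℂ) (α : ℂ) (C : Matrix (Fin d) (Fin d) ℂ) :
    ctrlOp α C * Viso φ₀ = Viso φ₀ * sectOp α C := by
  ext p s
  obtain ⟨a, i⟩ := p
  simp only [Matrix.mul_apply, ctrlOp, sectOp, Viso, Matrix.of_apply, Matrix.add_apply,
    Matrix.smul_apply, Matrix.kroneckerMap_apply, Fintype.sum_prod_type,
    Matrix.single, Matrix.fromBlocks, Sum.elim_inl, Sum.elim_inr]
  cases s <;> fin_cases a <;>
    simp [Fin.sum_univ_two, Matrix.one_apply, Finset.mul_sum, mul_comm,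
      Finset.sum_ite_eq', eq_comm]

/-- the inverse control construction `CTRL⁻¹`: conjugating the controlled
channel `ctrl_{C 0}-𝒞` by the isometry `V` yields the sector-preserving channel
`𝒞̃[C 0]` with Kraus operators `δ_{i0} ⊕ C i`. -/
theorem ctrl_inverse_supermap {d n : ℕ}
    (φ₀ : Fin d → ℂ) (hφ : ∑ t, star (φ₀ t) * φ₀ t = 1)
    (C : Fin (n+1) → Matrix (Fin d) (Fin d) ℂ)
    (hC : ∑ i, (C i)ᴴ * C i = 1) :
    ((Viso φ₀)ᴴ * Viso φ₀ = 1) ∧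
    (∀ ρ : Matrix (Unit ⊕ Fin d) (Unit ⊕ Fin d) ℂ,
      (Viso φ₀)ᴴ
        * (∑ i, ctrlOp (if i = 0 then (1:ℂ) else 0) (C i)
              * (Viso φ₀ * ρ * (Viso φ₀)ᴴ)
              * (ctrlOp (if i = 0 then (1:ℂ) else 0) (C i))ᴴ)
        * Viso φ₀
      = ∑ i, sectOp (if i = 0 then (1:ℂ) else 0) (C i) * ρ
          * (sectOp (if i = 0 then (1:ℂ) else 0) (C i))ᴴ) := by
  have hV := Viso_isometry φ₀ hφ
  refine ⟨hV, fun ρ => ?_⟩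
  rw [Matrix.mul_sum, Matrix.sum_mul]
  refine Finset.sum_congr rfl fun i _ => ?_
  set V := Viso φ₀ with hVd
  set K := ctrlOp (if i = 0 then (1:ℂ) else 0) (C i) with hKd
  set S := sectOp (if i = 0 then (1:ℂ) else 0) (C i) with hSd
  have h : K * V = V * S := ctrl_intertwine φ₀ _ (C i)
  have h' : Vᴴ * Kᴴ = Sᴴ * Vᴴ := by
    rw [← Matrix.conjTranspose_mul, h, Matrix.conjTranspose_mul]
  have e : Vᴴ * (K * (V * ρ * Vᴴ) * Kᴴ) * V = (Vᴴ * (K * V)) * ρ * ((Vᴴ * Kᴴ) * V) := by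
    simp only [Matrix.mul_assoc]
  rw [e, h, h', ← Matrix.mul_assoc Vᴴ V S, hV, Matrix.one_mul,
    Matrix.mul_assoc Sᴴ Vᴴ V, hV, Matrix.mul_one]
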